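/- The following are equivalent for A ∈ 2^ℕ: (1) there is a set B with A ≤_{T(tu)} B; (2) A is anti-complex; (3) g_A dominates every computable function; (4) A ≤_{uT(tu)} A*. -/

import Mathlib

open scoped Classical
open Filter

/-- The prefix of length `n` of a set (element of Cantor space), as a binary string. -/
def opre (B : ℕ → Bool) (n : ℕ) : List Bool := (List.range n).map B

/-- An order function: computable, nondecreasing and unbounded. -/
def IsOrder (f : ℕ → ℕ) : Prop := Computable f ∧ Monotone f ∧ ∀ m, ∃ n, m ≤ f n

/-- The discrete inverse of a nondecreasing unbounded function:
`discInv f k` is the greatest `n` with `f n ≤ k`. -/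
noncomputable def discInv (f : ℕ → ℕ) (k : ℕ) : ℕ := sSup {n | f n ≤ k}

/-- There is a Turing reduction computing the function `f` from the set oracle `B`
whose use on input `n` is bounded by `u n`: a monotone partial computable
string functional which computes `f n` from the prefix `B↾(u n)`. -/
def RedUse (f : ℕ → ℕ) (B : ℕ → Bool) (u : ℕ → ℕ) : Prop :=
  ∃ F : List Bool → ℕ →. ℕ, Partrec₂ F ∧
    (∀ (σ τ : List Bool) (n y : ℕ), σ <+: τ → y ∈ F σ n → y ∈ F τ n) ∧
    ∀ n, f n ∈ F (opre B (u n)) n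

/-- A set, viewed as a `ℕ`-valued function. -/
def natOf (A : ℕ → Bool) : ℕ → ℕ := fun n => cond (A n) 1 0

/-- Turing reduction of the set `A` to the set `B` with use bounded by `u`. -/
def SRedUse (A B : ℕ → Bool) (u : ℕ → ℕ) : Prop := RedUse (natOf A) B u

/-- Turing reducibility of a function to a set. -/
def TRed (f : ℕ → ℕ) (B : ℕ → Bool) : Prop := ∃ u, RedUse f B u

/-- Weak truth-table reducibility of a function to a set: the use is computably bounded. -/
def WttRed (f : ℕ → ℕ) (B : ℕ → Bool) : Prop := ∃ u, Computable u ∧ RedUse f B u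

/-- Weak truth-table reducibility between sets. -/
def SWttRed (A B : ℕ → Bool) : Prop := WttRed (natOf A) B

/-- `A` is reducible to `B` with tiny use: for every order function `h` there is
a Turing reduction of `A` to `B` with use bounded by `h`. -/
def TtuRed (A B : ℕ → Bool) : Prop := ∀ h, IsOrder h → SRedUse A B h

/-- `A` is uniformly reducible to `B` with tiny use: a single Turing reduction of
`A` to `B` whose use function is dominated by every order function. -/
def UTtuRed (A B : ℕ → Bool) : Prop :=
  ∃ u : ℕ → ℕ, (∀ h, IsOrder h → ∀ᶠ n in atTop, u n ≤ h n) ∧ SRedUse A B u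

/-- The effective join of two sets. -/
def join (A B : ℕ → Bool) : ℕ → Bool := fun n => if n % 2 = 0 then A (n / 2) else B (n / 2)

/-- The halting set `K = {e : φ_e(e)↓}`. -/
noncomputable def Khalt : ℕ → Bool := fun e =>
  decide (((Denumerable.ofNat Nat.Partrec.Code e).eval e).Dom)

/-- `U` is an optimal machine (for plain Kolmogorov complexity on binary strings). -/
def Optimal (U : List Bool →. List Bool) : Prop :=
  Partrec U ∧ ∀ M : List Bool →. List Bool, Partrec M →
    ∃ c, ∀ (p x : List Bool), x ∈ M p → ∃ q : List Bool, q.length ≤ p.length + c ∧ x ∈ U q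

/-- Plain Kolmogorov complexity of a string relative to the machine `U`. -/
noncomputable def Cplx (U : List Bool →. List Bool) (x : List Bool) : ℕ :=
  sInf { k | ∃ p : List Bool, p.length = k ∧ x ∈ U p }

/-- Kolmogorov complexity of a natural number (coded as a binary string). -/
noncomputable def CplxN (U : List Bool →. List Bool) (n : ℕ) : ℕ := Cplx U (Nat.bits n)

/-- `A` is anti-complex: for every order function `f`, `C(A↾f(n)) ≤ n` for almost all `n`. -/
def AntiComplex (U : List Bool →. List Bool) (A : ℕ → Bool) : Prop :=
  ∀ f, IsOrder f → ∀ᶠ n in atTop, Cplx U (opre A (f n)) ≤ n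

/-- `g_A(k)` is the least `n` such that `C(A↾m) > k` for all `m ≥ n`. -/
noncomputable def gA (U : List Bool →. List Bool) (A : ℕ → Bool) (k : ℕ) : ℕ :=
  sInf {n | ∀ m, n ≤ m → k < Cplx U (opre A m)}

/-- Coding of binary strings by natural numbers, ordered by length first. -/
def strToNat (l : List Bool) : ℕ := l.foldl (fun a b => 2 * a + cond b 1 0) 1 - 1

/-- The least `U`-description of the string `x`, as a natural number. -/
noncomputable def leastDesc (U : List Bool →. List Bool) (x : List Bool) : ℕ :=
  sInf {m | ∃ p : List Bool, strToNat p = m ∧ x ∈ U p}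

/-- The set `A* = {(A↾g_A(k))* : k ∈ ℕ}` of least descriptions of the segments `A↾g_A(k)`. -/
noncomputable def Astar (U : List Bool →. List Bool) (A : ℕ → Bool) : ℕ → Bool :=
  fun m => decide (∃ k, m = leastDesc U (opre A (gA U A k)))

/-- A c.e. trace for `f` bounded by `h`: a uniformly c.e. sequence of finite sets
`T n` with `f n ∈ T n` and `|T n| ≤ h n`. -/
def CeTrace (h f : ℕ → ℕ) : Prop :=
  ∃ S : ℕ → ℕ → Prop, REPred (fun p : ℕ × ℕ => S p.1 p.2) ∧
    ∀ n, S n (f n) ∧ { y | S n y }.Finite ∧ Set.ncard { y | S n y } ≤ h n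

/-- The wtt-degree of `A` is r.e. traceable. -/
def ReTraceableWtt (A : ℕ → Bool) : Prop :=
  ∃ h, IsOrder h ∧ ∀ f : ℕ → ℕ, WttRed f A → CeTrace h f

/-- A computable trace for `f` bounded by `h` (finite sets given by canonical indices,
here: by computable lists). -/
def CompTrace (h f : ℕ → ℕ) : Prop :=
  ∃ T : ℕ → List ℕ, Computable T ∧ ∀ n, f n ∈ T n ∧ (T n).length ≤ h n

/-- Truth-table reducibility of a function to a set: a total computable functional
with computably bounded use. -/
def TtRed (f : ℕ → ℕ) (A : ℕ → Bool) : Prop :=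
  ∃ u : ℕ → ℕ, Computable u ∧ ∃ F : List Bool → ℕ → ℕ, Computable₂ F ∧
    ∀ n, F (opre A (u n)) n = f n

/-- `A` is Schnorr trivial (via the Franklin–Stephan characterisation:
its truth-table degree is computably traceable). -/
def SchnorrTrivial (A : ℕ → Bool) : Prop :=
  ∃ h, IsOrder h ∧ ∀ f : ℕ → ℕ, TtRed f A → CompTrace h f

/-- `A` is truth-table reducible to `B` with tiny use: for every order function `h`
there is a total computable functional computing `A` from `B` with use bounded by `h`. -/
def TttuRed (A B : ℕ → Bool) : Prop :=
  ∀ h, IsOrder h → ∃ F : List Bool → ℕ → Bool, Computable₂ F ∧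
    ∀ n, F (opre B (h n)) n = A n

/-- `g` dominates every computable function. -/
def Dominant (g : ℕ → ℕ) : Prop :=
  ∀ f : ℕ → ℕ, Computable f → ∀ᶠ n in atTop, f n ≤ g n

/-- Prefix of a function oracle. -/
def fpre (f : ℕ → ℕ) (n : ℕ) : List ℕ := (List.range n).map f

/-- Reduction of a set `A` to a function oracle `f` with use bounded by `u`. -/
def RedUseFn (A : ℕ → Bool) (f : ℕ → ℕ) (u : ℕ → ℕ) : Prop :=
  ∃ F : List ℕ → ℕ →. ℕ, Partrec₂ F ∧
    (∀ (σ τ : List ℕ) (n y : ℕ), σ <+: τ → y ∈ F σ n → y ∈ F τ n) ∧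
    ∀ n, natOf A n ∈ F (fpre f (u n)) n

/-- Uniform reducibility with tiny use to a function oracle. -/
def UTtuRedFn (A : ℕ → Bool) (f : ℕ → ℕ) : Prop :=
  ∃ u : ℕ → ℕ, (∀ h, IsOrder h → ∀ᶠ n in atTop, u n ≤ h n) ∧ RedUseFn A f u

/-- The graph of `f`, coded as a set via the standard pairing. -/
def graphOf (f : ℕ → ℕ) : ℕ → Bool :=
  fun m => decide (f (Nat.unpair m).1 = (Nat.unpair m).2)

/-- The real number with binary expansion `X`. -/
noncomputable def realOf (X : ℕ → Bool) : ℝ := ∑' n, cond (X n) (((2:ℝ) ^ (n + 1))⁻¹) 0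

/-- `X` is a left-c.e. real. -/
def LeftCE (X : ℕ → Bool) : Prop :=
  ∃ q : ℕ → ℚ, Computable q ∧ Monotone q ∧
    Tendsto (fun n => (q n : ℝ)) atTop (nhds (realOf X))

/-- `X` is Martin-Löf random: it passes every Martin-Löf test (given as a uniformly
c.e. sequence of sets of strings of measure at most `2^{-n}`). -/
def MLRandom (X : ℕ → Bool) : Prop :=
  ∀ W : ℕ → List Bool → Prop,
    REPred (fun p : ℕ × List Bool => W p.1 p.2) →
    (∀ n, ∑' σ : {σ : List Bool // W n σ}, ((2:ℝ) ^ (σ : List Bool).length)⁻¹ ≤ ((2:ℝ) ^ n)⁻¹) →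
    ∃ n, ∀ σ, W n σ → opre X σ.length ≠ σ

/-- `A` is a c.e. set. -/
def CeSet (A : ℕ → Bool) : Prop := REPred (fun n => A n = true)

/-!
(1 ⇒ 2) Given an order `f`, take a reduction of `A` to `B` with use `h` so slow that
`h (f n) ≤ n / 2`: then `A↾f(n)` is computed from the parity of `n` and `B↾⌊n/2⌋`, so
`C(A↾f(n)) ≤ n / 2 + O(1)`. (2 ⇒ 3) A computable `f` lies below an order `h`, and
`C(A↾h(n)) ≤ n` forces `h(n) < g_A(n)`. (3 ⇒ 4) As `C(A↾g_A(k)) ≤ k + O(1)`, the least description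
of `A↾g_A(k)` is below `2^(k + O(1))`; to compute `A(n)`, scan `A*` for a description of a segment
longer than `n`. With `κ(n)` the least `k` such that `n < g_A(k)`, the use `2^(κ(n) + O(1))` is
dominated by every order because `g_A` dominates every computable function. (4 ⇒ 1) A single
reduction whose use is eventually below `h` is patched on finitely many inputs.
-/

lemma opre_length (B : ℕ → Bool) (n : ℕ) : (opre B n).length = n := by simp [opre]

lemma opre_prefix (B : ℕ → Bool) {m n : ℕ} (h : m ≤ n) : opre B m <+: opre B n := by
  simpa [opre, ← List.map_take, List.take_range, h] using (List.take_prefix m (opre B n))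

lemma opre_getD (B : ℕ → Bool) {m n : ℕ} (h : m < n) : (opre B n).getD m false = B m := by
  simp [opre, List.getElem?_range h]

lemma opre_succ (B : ℕ → Bool) (n : ℕ) : opre B (n + 1) = opre B n ++ [B n] := by
  simp [opre, List.range_succ]

lemma opre_injective (B : ℕ → Bool) : Function.Injective (opre B) := fun m n h => by
  simpa [opre_length] using congrArg List.length h

lemma le_foldl_bits (p : List Bool) (a : ℕ) : a ≤ p.foldl (fun a b => 2 * a + cond b 1 0) a := by
  induction p generalizing a with
  | nil => rfl
  | cons b p ih => exact (Nat.le_mul_of_pos_left a two_pos).trans (le_self_add.trans (ih _))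

lemma strToNat_append_singleton (p : List Bool) (b : Bool) :
    strToNat (p ++ [b]) = 2 * strToNat p + 1 + cond b 1 0 := by
  have := le_foldl_bits p 1
  simp only [strToNat, List.foldl_append, List.foldl_cons, List.foldl_nil]
  omega

lemma strToNat_lt (p : List Bool) : strToNat p + 1 < 2 ^ (p.length + 1) := by
  induction p using List.reverseRecOn with
  | nil => simp [strToNat]
  | append_singleton p b ih =>
    rw [strToNat_append_singleton, List.length_append, List.length_singleton, pow_succ]
    cases b <;> simp <;> omega

/-- `m + 1` in binary is `1` followed by `natDecode m`. -/
def natDecode : ℕ → List Bool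
  | 0 => []
  | m + 1 => natDecode (m / 2) ++ [decide (m % 2 = 1)]

lemma natDecode_strToNat (p : List Bool) : natDecode (strToNat p) = p := by
  induction p using List.reverseRecOn with
  | nil => simp [strToNat, natDecode]
  | append_singleton p b ih =>
    rw [strToNat_append_singleton, natDecode.eq_def]
    cases b <;> simp [Nat.add_assoc, Nat.mul_add_div, ih]

lemma primrec_natDecode : Primrec natDecode := by
  let step : List (List Bool) → List Bool := fun l =>
    if l.length = 0 then [] else l.getD ((l.length - 1) / 2) [] ++ [decide ((l.length - 1) % 2 = 1)]
  have hstep : Primrec step := by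
    have hpred : Primrec fun l : List (List Bool) => l.length - 1 :=
      Primrec.nat_sub.comp Primrec.list_length (Primrec.const 1)
    refine Primrec.ite (Primrec.eq.comp Primrec.list_length (Primrec.const 0)) (Primrec.const [])
      (Primrec.list_append.comp ((Primrec.list_getD []).comp Primrec.id
        (Primrec.nat_div.comp hpred (Primrec.const 2)))
        (Primrec.list_cons.comp (Primrec.eq.comp (Primrec.nat_mod.comp hpred (Primrec.const 2))
          (Primrec.const 1)).decide (Primrec.const [])))
  refine (Primrec.nat_strong_rec (fun (_ : Unit) => natDecode)
    (Primrec.option_some.comp (hstep.comp Primrec.snd)).to₂ fun _ n => ?_).comp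
    (Primrec.const ()) Primrec.id
  cases n with
  | zero => simp [step, natDecode]
  | succ m =>
    have hm : m / 2 < m + 1 := by omega
    simp [step, natDecode, List.getElem?_range hm]

section OrdInv

variable {h : ℕ → ℕ}

/-- Junk value `0` when `h` never reaches `m`. -/
noncomputable def ordInv (h : ℕ → ℕ) (m : ℕ) : ℕ := sInf {n | m ≤ h n}

lemma ordInv_le {m n : ℕ} (hmn : m ≤ h n) : ordInv h m ≤ n := Nat.sInf_le hmn

lemma ordInv_apply_le (n : ℕ) : ordInv h (h n) ≤ n := ordInv_le le_rfl

lemma le_apply_ordInv (hunb : ∀ m, ∃ n, m ≤ h n) (m : ℕ) : m ≤ h (ordInv h m) :=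
  Nat.sInf_mem (hunb m)

lemma ordInv_mono (hunb : ∀ m, ∃ n, m ≤ h n) : Monotone (ordInv h) := fun _ _ hab =>
  ordInv_le (hab.trans (le_apply_ordInv hunb _))

lemma lt_ordInv_succ (hmono : Monotone h) (hunb : ∀ m, ∃ n, m ≤ h n) (n : ℕ) :
    n < ordInv h (h n + 1) := by
  by_contra! hle
  have := le_apply_ordInv hunb (h n + 1)
  have := hmono hle
  omega

lemma computable_ordInv (hh : Computable h) (hunb : ∀ m, ∃ n, m ≤ h n) :
    Computable (ordInv h) := by
  have hdec : Computable₂ fun m n => decide (m ≤ h n) :=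
    (Primrec.nat_le.decide.to_comp.comp Computable.fst (hh.comp Computable.snd)).to₂
  refine (Partrec.rfind (Partrec.some.comp hdec).to₂).of_eq_tot fun m => ?_
  refine Nat.mem_rfind.2 ⟨by simpa using le_apply_ordInv hunb m, fun hlt => ?_⟩
  simpa using fun hle => (Nat.notMem_of_lt_sInf hlt) hle

lemma IsOrder.ordInv (hh : IsOrder h) : IsOrder (ordInv h) :=
  ⟨computable_ordInv hh.1 hh.2.2, ordInv_mono hh.2.2,
    fun m => ⟨h m + 1, (lt_ordInv_succ hh.2.1 hh.2.2 m).le⟩⟩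

lemma IsOrder.div (hh : IsOrder h) {d : ℕ} (hd : 0 < d) : IsOrder fun n => h n / d := by
  refine ⟨(Primrec.nat_div.to_comp.comp hh.1 (Computable.const d)), fun a b hab =>
    Nat.div_le_div_right (hh.2.1 hab), fun m => ?_⟩
  obtain ⟨n, hn⟩ := hh.2.2 (m * d)
  exact ⟨n, (Nat.le_div_iff_mul_le hd).2 hn⟩

end OrdInv

lemma exists_isOrder_ge {f : ℕ → ℕ} (hf : Computable f) :
    ∃ h, IsOrder h ∧ ∀ n, f n ≤ h n := by
  let runMax : ℕ → ℕ := fun n => Nat.rec (f 0) (fun m ih => max ih (f (m + 1))) n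
  have hc : Computable runMax :=
    Computable.nat_rec Computable.id (Computable.const (f 0))
      (Primrec.nat_max.to_comp.comp (Computable.snd.comp Computable.snd)
        (hf.comp (Computable.succ.comp (Computable.fst.comp Computable.snd)))).to₂
  have hmono : Monotone runMax := monotone_nat_of_le_succ fun n => le_max_left _ _
  have hle : ∀ n, f n ≤ runMax n := fun n => by cases n <;> simp [runMax]
  exact ⟨fun n => n + runMax n,
    ⟨Primrec.nat_add.to_comp.comp Computable.id hc, fun a b hab => add_le_add hab (hmono hab),
      fun m => ⟨m, Nat.le_add_right _ _⟩⟩,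
    fun n => (hle n).trans (Nat.le_add_left _ _)⟩

lemma Dominant.eventually_comp_le {g v h κ : ℕ → ℕ} (hg : Dominant g) (hv : Computable v)
    (hvmono : Monotone v) (hh : IsOrder h) (hκ : ∀ n j, j < κ n → g j ≤ n) :
    ∀ᶠ n in atTop, v (κ n) ≤ h n := by
  obtain ⟨K, hK⟩ := eventually_atTop.1 <|
    hg _ ((computable_ordInv hh.1 hh.2.2).comp (hv.comp Computable.succ))
  refine eventually_atTop.2 ⟨ordInv h (v K), fun n hn => ?_⟩
  rcases Nat.lt_or_ge K (κ n) with hlt | hle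
  · obtain ⟨k, hk⟩ := Nat.exists_eq_add_of_lt hlt
    have hkn : ordInv h (v (κ n)) ≤ n := by
      rw [hk]
      exact (hK (K + k) le_self_add).trans (hκ n _ (by omega))
    exact (le_apply_ordInv hh.2.2 _).trans (hh.2.1 hkn)
  · exact (hvmono hle).trans ((le_apply_ordInv hh.2.2 _).trans (hh.2.1 hn))

lemma Part.map_mem_mapM {α β : Type*} {F : α → Part β} {g : α → β} :
    ∀ {l : List α}, (∀ a ∈ l, g a ∈ F a) → l.map g ∈ l.mapM F
  | [], _ => Part.mem_some _
  | a :: l, hl => by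
    rw [List.mapM_cons]
    exact Part.mem_bind_iff.2 ⟨g a, hl a List.mem_cons_self, Part.mem_bind_iff.2
      ⟨_, Part.map_mem_mapM fun b hb => hl b (List.mem_cons_of_mem a hb), Part.mem_some _⟩⟩

lemma Partrec.list_range_mapM {α σ : Type*} [Primcodable α] [Primcodable σ] {F : α → ℕ →. σ}
    (hF : Partrec₂ F) : Partrec₂ fun a L => (List.range L).mapM fun j => F a j := by
  refine (Partrec.nat_rec Computable.snd (Partrec.const' (Part.some []))
    (hF.comp (Computable.fst.comp Computable.fst) (Computable.fst.comp Computable.snd)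
      |>.map (Computable.list_concat.comp (Computable.snd.comp (Computable.snd.comp
        Computable.fst)) Computable.snd).to₂).to₂).to₂.of_eq fun ⟨a, L⟩ => ?_
  induction L with
  | zero => rfl
  | succ L ih =>
    simp only at ih ⊢
    rw [ih, List.range_succ, List.mapM_append]
    simp [Part.bind_some_eq_map, Part.map_map, Function.comp_def]

lemma Partrec.cond_some {α σ : Type*} [Primcodable α] [Primcodable σ] {c : α → Bool}
    {f : α →. σ} {g : α → σ} (hc : Computable c) (hf : Partrec f) (hg : Computable g) :
    Partrec fun a => bif c a then f a else Part.some (g a) := by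
  refine (Partrec.sumCasesOn_right (f := fun a => bif c a then Sum.inr () else Sum.inl (g a))
    (Computable.cond hc (Computable.const _) (Computable.sumInl.comp hg)) Computable.snd.to₂
    (hf.comp Computable.fst).to₂).of_eq fun a => ?_
  cases c a <;> rfl

section Complexity

variable {U : List Bool →. List Bool}

lemma Optimal.exists_mem (hU : Optimal U) (x : List Bool) : ∃ p, x ∈ U p := by
  obtain ⟨c, hc⟩ := hU.2 _ (Computable.id.partrec)
  obtain ⟨q, -, hq⟩ := hc x x (Part.mem_some x)
  exact ⟨q, hq⟩

lemma cplx_le {x p : List Bool} (h : x ∈ U p) : Cplx U x ≤ p.length := Nat.sInf_le ⟨p, rfl, h⟩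

lemma Optimal.exists_length_eq_cplx (hU : Optimal U) (x : List Bool) :
    ∃ p : List Bool, p.length = Cplx U x ∧ x ∈ U p := by
  obtain ⟨p, hp⟩ := hU.exists_mem x
  have hne : {k | ∃ p : List Bool, p.length = k ∧ x ∈ U p}.Nonempty := ⟨p.length, p, rfl, hp⟩
  exact Nat.sInf_mem hne

lemma Optimal.exists_cplx_le (hU : Optimal U) {M : List Bool →. List Bool} (hM : Partrec M) :
    ∃ c, ∀ p x, x ∈ M p → Cplx U x ≤ p.length + c := by
  obtain ⟨c, hc⟩ := hU.2 M hM
  refine ⟨c, fun p x hx => ?_⟩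
  obtain ⟨q, hq, hqx⟩ := hc p x hx
  exact (cplx_le hqx).trans hq

lemma Optimal.finite_cplx_le (hU : Optimal U) (k : ℕ) : {x | Cplx U x ≤ k}.Finite := by
  choose desc hlen hdesc using hU.exists_length_eq_cplx
  refine Set.Finite.of_injOn (f := desc) (fun x hx => ?_) (fun x _ y _ hxy => ?_)
    (List.finite_length_le Bool k)
  · exact (hlen x).trans_le hx
  · exact Part.mem_unique (hdesc x) (hxy ▸ hdesc y)

lemma Optimal.mem_natDecode_leastDesc (hU : Optimal U) (x : List Bool) :
    x ∈ U (natDecode (leastDesc U x)) := by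
  obtain ⟨p, hp⟩ := hU.exists_mem x
  have hne : {m | ∃ p, strToNat p = m ∧ x ∈ U p}.Nonempty := ⟨_, p, rfl, hp⟩
  obtain ⟨q, hq, hqx⟩ := Nat.sInf_mem hne
  rwa [leastDesc, ← hq, natDecode_strToNat]

lemma Optimal.leastDesc_lt (hU : Optimal U) (x : List Bool) :
    leastDesc U x < 2 ^ (Cplx U x + 1) := by
  obtain ⟨p, hp, hpx⟩ := hU.exists_length_eq_cplx x
  have : leastDesc U x ≤ strToNat p := Nat.sInf_le ⟨p, rfl, hpx⟩
  have := strToNat_lt p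
  rw [hp] at this
  omega

lemma Optimal.exists_cplx_append_singleton_le (hU : Optimal U) :
    ∃ c, ∀ x b, Cplx U (x ++ [b]) ≤ Cplx U x + c := by
  have hM : Partrec fun q : List Bool => (U q.tail).map (· ++ [q.headI]) :=
    (hU.1.comp Primrec.list_tail.to_comp).map
      (Computable.list_concat.comp Computable.snd
        (Primrec.list_headI.to_comp.comp Computable.fst)).to₂
  obtain ⟨c, hc⟩ := hU.exists_cplx_le hM
  refine ⟨c + 1, fun x b => ?_⟩
  obtain ⟨p, hp, hpx⟩ := hU.exists_length_eq_cplx x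
  have := hc (b :: p) (x ++ [b]) (Part.mem_map_iff _ |>.2 ⟨x, hpx, rfl⟩)
  simp only [List.length_cons, hp] at this
  omega

end Complexity

section SegmentComplexity

variable {U : List Bool →. List Bool} {A : ℕ → Bool}

lemma lt_cplx_of_gA_le (hU : Optimal U) {k m : ℕ} (hm : gA U A k ≤ m) :
    k < Cplx U (opre A m) := by
  obtain ⟨N, hN⟩ := ((hU.finite_cplx_le k).preimage (opre_injective A).injOn).bddAbove
  have hne : {n | ∀ m, n ≤ m → k < Cplx U (opre A m)}.Nonempty :=
    ⟨N + 1, fun m hm => not_le.1 fun hle => by have := hN hle; omega⟩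
  exact Nat.sInf_mem hne m hm

lemma lt_gA_of_cplx_le (hU : Optimal U) {k m : ℕ} (hm : Cplx U (opre A m) ≤ k) : m < gA U A k :=
  not_le.1 fun hle => (lt_cplx_of_gA_le hU hle).not_ge hm

lemma cplx_opre_pred_gA_le (hU : Optimal U) {k : ℕ} (hk : gA U A k ≠ 0) :
    Cplx U (opre A (gA U A k - 1)) ≤ k := by
  have hnot := Nat.notMem_of_lt_sInf (s := {n | ∀ m, n ≤ m → k < Cplx U (opre A m)})
    (m := gA U A k - 1) (by unfold gA at hk ⊢; omega)
  simp only [Set.mem_ofPred_eq, not_forall, not_lt] at hnot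
  obtain ⟨m, hm, hle⟩ := hnot
  obtain rfl | hlt := hm.eq_or_lt
  · exact hle
  · exact absurd (lt_cplx_of_gA_le hU (m := m) (by omega)) hle.not_gt

lemma exists_cplx_opre_gA_le (hU : Optimal U) (A : ℕ → Bool) :
    ∃ c, ∀ k, Cplx U (opre A (gA U A k)) ≤ k + c := by
  obtain ⟨c, hc⟩ := hU.exists_cplx_append_singleton_le
  refine ⟨c + Cplx U [], fun k => ?_⟩
  rcases Nat.eq_zero_or_pos (gA U A k) with h0 | hpos
  · rw [h0]
    show Cplx U [] ≤ _
    omega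
  · obtain ⟨t, ht⟩ := Nat.exists_eq_add_of_lt hpos
    have := cplx_opre_pred_gA_le hU hpos.ne'
    rw [ht, zero_add, Nat.add_sub_cancel] at this
    rw [ht, zero_add, opre_succ]
    have := hc (opre A t) (A t)
    omega

end SegmentComplexity

lemma eventually_cplx_le_of_sRedUse {U : List Bool →. List Bool} (hU : Optimal U)
    {A B : ℕ → Bool} {f h : ℕ → ℕ} (hf : Computable f) (hmono : Monotone h)
    (hhf : ∀ n, h (f n) ≤ n / 2) (hred : SRedUse A B h) :
    ∀ᶠ n in atTop, Cplx U (opre A (f n)) ≤ n := by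
  obtain ⟨F, hF, hFmono, hFA⟩ := hred
  -- the head bit of an input carries the parity of `n`, its tail is `B↾⌊n/2⌋`
  let M : List Bool →. List Bool := fun q =>
    ((List.range (f (2 * q.tail.length + q.headI.toNat))).mapM fun j => F q.tail j).map
      (List.map fun v => decide (v = 1))
  have hM : Partrec M := by
    have hlen : Primrec fun q : List Bool => 2 * q.tail.length + q.headI.toNat :=
      Primrec.nat_add.comp (Primrec.nat_double.comp (Primrec.list_length.comp Primrec.list_tail))
        ((Primrec.cond Primrec.list_headI (Primrec.const 1) (Primrec.const 0)).of_eq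
          fun q => by cases q.headI <;> rfl)
    exact ((Partrec.list_range_mapM hF).comp Primrec.list_tail.to_comp
      (hf.comp hlen.to_comp)).map
      (Primrec.list_map Primrec.snd (Primrec.eq.comp Primrec.snd (Primrec.const 1)).decide.to₂
        |>.to_comp.to₂)
  obtain ⟨c, hc⟩ := hU.exists_cplx_le hM
  filter_upwards [eventually_ge_atTop (2 * c + 2)] with n hn
  have hn2 : 2 * (opre B (n / 2)).length + (decide (n % 2 = 1)).toNat = n := by
    rw [opre_length]; rcases Nat.mod_two_eq_zero_or_one n with h | h <;> simp [h] <;> omega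
  have hout : opre A (f n) ∈ M (decide (n % 2 = 1) :: opre B (n / 2)) := by
    refine Part.mem_map_iff _ |>.2 ⟨(List.range (f n)).map (natOf A), ?_, ?_⟩
    · simp only [List.tail_cons, List.headI_cons, hn2]
      refine Part.map_mem_mapM fun j hj => hFmono _ _ _ _ (opre_prefix B ?_) (hFA j)
      exact (hmono (List.mem_range.1 hj).le).trans (hhf n)
    · simp only [opre, List.map_map]
      congr 1; funext j
      rw [Function.comp_apply, Bool.eq_iff_iff, decide_eq_true_iff, natOf]
      cases A j <;> simp
  have := hc _ _ hout
  simp only [List.length_cons, opre_length] at this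
  omega

theorem TtuRed.antiComplex {U : List Bool →. List Bool} (hU : Optimal U) {A B : ℕ → Bool}
    (h : TtuRed A B) : AntiComplex U A := fun _ hf =>
  have hslow := hf.ordInv.div two_pos
  eventually_cplx_le_of_sRedUse hU hf.1 hslow.2.1
    (fun n => Nat.div_le_div_right (ordInv_apply_le n)) (h _ hslow)

theorem AntiComplex.dominant_gA {U : List Bool →. List Bool} (hU : Optimal U) {A : ℕ → Bool}
    (hA : AntiComplex U A) : Dominant (gA U A) := by
  intro f hf
  obtain ⟨h, hh, hfh⟩ := exists_isOrder_ge hf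
  filter_upwards [hA h hh] with n hn
  exact (hfh n).trans (lt_gA_of_cplx_le hU hn).le

def markedLongOutput (U : List Bool →. List Bool) (σ : List Bool) (n i : ℕ) : Part Bool :=
  bif σ.getD i false then (U (natDecode i)).map fun x => decide (n < x.length) else Part.some false

/-- Positions marked in `σ` are read as codes of `U`-programs. Scanning them sequentially rather
than dovetailing is what makes this functional monotone in `σ`. -/
def descSearch (U : List Bool →. List Bool) (σ : List Bool) (n : ℕ) : Part ℕ :=
  (Nat.rfind (markedLongOutput U σ n)).bind fun i =>
    (U (natDecode i)).map fun x => cond (x.getD n false) 1 0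

section DescSearch

variable {U : List Bool →. List Bool}

lemma partrec₂_descSearch (hU : Partrec U) : Partrec₂ (descSearch U) := by
  have hrun : Partrec fun p : (List Bool × ℕ) × ℕ => U (natDecode p.2) :=
    hU.comp (primrec_natDecode.to_comp.comp Computable.snd)
  refine ((Partrec.rfind (Partrec.cond_some
      ((Primrec.list_getD false).to_comp.comp (Computable.fst.comp Computable.fst) Computable.snd)
      (hrun.map (Primrec.nat_lt.comp (Primrec.snd.comp (Primrec.fst.comp Primrec.fst))
        (Primrec.list_length.comp Primrec.snd)).decide.to_comp.to₂)
      (Computable.const false)).to₂).bind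
    (hrun.map (Primrec.cond ((Primrec.list_getD false).comp Primrec.snd
      (Primrec.snd.comp (Primrec.fst.comp Primrec.fst))) (Primrec.const 1)
      (Primrec.const 0)).to_comp.to₂).to₂).to₂

lemma getD_eq_true_of_true_mem_markedLongOutput {σ : List Bool} {n i : ℕ}
    (h : true ∈ markedLongOutput U σ n i) : σ.getD i false = true := by
  by_contra hi
  rw [markedLongOutput, Bool.eq_false_iff.2 hi, cond_false, Part.mem_some_iff] at h
  exact Bool.true_eq_false_eq_False h

lemma descSearch_mono {σ τ : List Bool} {n y : ℕ} (hστ : σ <+: τ)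
    (hy : y ∈ descSearch U σ n) : y ∈ descSearch U τ n := by
  obtain ⟨i, hi, hyi⟩ := Part.mem_bind_iff.1 hy
  have hlen : i < σ.length := by
    by_contra! hle
    have := getD_eq_true_of_true_mem_markedLongOutput (Nat.mem_rfind.1 hi).1
    rw [List.getD_eq_default _ _ hle] at this
    exact Bool.false_ne_true this
  have hagree : ∀ j ≤ i, markedLongOutput U τ n j = markedLongOutput U σ n j := by
    intro j hj
    obtain ⟨r, rfl⟩ := hστ
    rw [markedLongOutput, markedLongOutput, List.getD_append _ _ _ _ (by omega)]
  refine Part.mem_bind_iff.2 ⟨i, Nat.mem_rfind.2 ⟨?_, fun hj => ?_⟩, hyi⟩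
  · exact hagree i le_rfl ▸ (Nat.mem_rfind.1 hi).1
  · exact hagree _ hj.le ▸ (Nat.mem_rfind.1 hi).2 hj

lemma natOf_mem_descSearch (hU : Optimal U) {A : ℕ → Bool} {k n m : ℕ}
    (hn : n < gA U A k) (hm : leastDesc U (opre A (gA U A k)) < m) :
    natOf A n ∈ descSearch U (opre (Astar U A) m) n := by
  set σ := opre (Astar U A) m
  have hmarked : ∀ i, σ.getD i false = true → ∃ k', opre A (gA U A k') ∈ U (natDecode i) := by
    intro i hi
    have him : i < m := by
      by_contra! hle
      rw [List.getD_eq_default _ _ (by rwa [opre_length])] at hi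
      exact Bool.false_ne_true hi
    rw [opre_getD _ him, Astar, decide_eq_true_iff] at hi
    obtain ⟨k', rfl⟩ := hi
    exact ⟨k', hU.mem_natDecode_leastDesc _⟩
  have hdom : (Nat.rfind (markedLongOutput U σ n)).Dom := by
    refine Nat.rfind_dom'.2 ⟨leastDesc U (opre A (gA U A k)), ?_, fun {j} _ => ?_⟩
    · have hmark : σ.getD (leastDesc U (opre A (gA U A k))) false = true := by
        rw [opre_getD _ hm, Astar, decide_eq_true_iff]
        exact ⟨k, rfl⟩
      rw [markedLongOutput, hmark, cond_true]
      exact Part.mem_map_iff _ |>.2 ⟨_, hU.mem_natDecode_leastDesc _, by simpa [opre_length]⟩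
    · cases hj : σ.getD j false
      · rw [markedLongOutput, hj, cond_false]
        trivial
      · obtain ⟨k', hk'⟩ := hmarked j hj
        rw [markedLongOutput, hj, cond_true]
        exact Part.dom_iff_mem.2 ⟨_, Part.mem_map _ hk'⟩
  obtain ⟨i, hi⟩ := Part.dom_iff_mem.1 hdom
  have hmi := (Nat.mem_rfind.1 hi).1
  have hmark := getD_eq_true_of_true_mem_markedLongOutput hmi
  obtain ⟨k', hk'⟩ := hmarked i hmark
  rw [markedLongOutput, hmark, cond_true] at hmi
  obtain ⟨x, hx, hlong⟩ := Part.mem_map_iff _ |>.1 hmi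
  obtain rfl := Part.mem_unique hx hk'
  rw [decide_eq_true_iff, opre_length] at hlong
  refine Part.mem_bind_iff.2 ⟨i, hi, Part.mem_map_iff _ |>.2 ⟨_, hk', ?_⟩⟩
  rw [opre_getD _ hlong]
  rfl

end DescSearch

lemma RedUse.of_eventually_le {f u v : ℕ → ℕ} {B : ℕ → Bool} (hred : RedUse f B u)
    (huv : ∀ᶠ n in atTop, u n ≤ v n) : RedUse f B v := by
  obtain ⟨F, hF, hFmono, hFf⟩ := hred
  obtain ⟨N, hN⟩ := eventually_atTop.1 huv
  let table := (List.range N).map f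
  refine ⟨fun σ n => bif decide (N ≤ n) then F σ n else Part.some (table.getD n 0), ?_, ?_, ?_⟩
  · exact (Partrec.cond_some (Primrec.nat_le.comp (Primrec.const N) Primrec.snd).decide.to_comp
      hF ((Primrec.list_getD 0).comp (Primrec.const table) Primrec.snd).to_comp).to₂
  · intro σ τ n y hστ hy
    by_cases hn : N ≤ n <;> simp only [hn, decide_true, decide_false, cond_true, cond_false] at hy ⊢
    exacts [hFmono σ τ n y hστ hy, hy]
  · intro n
    by_cases hn : N ≤ n <;> simp only [hn, decide_true, decide_false, cond_true, cond_false]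
    · exact hFmono _ _ n _ (opre_prefix B (hN n hn)) (hFf n)
    · simp [table, List.getElem?_range (not_le.1 hn)]

theorem UTtuRed.ttuRed {A B : ℕ → Bool} (h : UTtuRed A B) : TtuRed A B := by
  obtain ⟨u, hdom, hred⟩ := h
  exact fun g hg => hred.of_eventually_le (hdom g hg)

theorem Dominant.uTtuRed_astar {U : List Bool →. List Bool} (hU : Optimal U) {A : ℕ → Bool}
    (hdom : Dominant (gA U A)) : UTtuRed A (Astar U A) := by
  obtain ⟨c, hc⟩ := exists_cplx_opre_gA_le hU A
  have hex : ∀ n, ∃ k, n < gA U A k := fun n => ⟨_, lt_gA_of_cplx_le hU le_rfl⟩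
  let κ n := Nat.find (hex n)
  have hpow : Computable fun k => 2 ^ (k + c + 1) :=
    (Primrec₂.unpaired'.1 Nat.Primrec.pow).to_comp.comp (Computable.const 2)
      (Primrec.nat_add.comp Primrec.id (Primrec.const (c + 1))).to_comp
  refine ⟨fun n => 2 ^ (κ n + c + 1), fun h hh => ?_, descSearch U, partrec₂_descSearch hU.1,
    fun _ _ _ _ => descSearch_mono, fun n => natOf_mem_descSearch hU (Nat.find_spec (hex n)) ?_⟩
  · exact hdom.eventually_comp_le (κ := κ) hpow
      (fun _ _ hab => Nat.pow_le_pow_right two_pos (by omega)) hh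
      fun n _ hj => not_lt.1 (Nat.find_min (hex n) hj)
  · exact (hU.leastDesc_lt _).trans_le (Nat.pow_le_pow_right two_pos (Nat.succ_le_succ (hc _)))

theorem stmt15 (U : List Bool →. List Bool) (hU : Optimal U) (A : ℕ → Bool) :
    List.TFAE [∃ B, TtuRed A B, AntiComplex U A, Dominant (gA U A),
      UTtuRed A (Astar U A)] := by
  tfae_have 1 → 2 := fun ⟨_, hB⟩ => hB.antiComplex hU
  tfae_have 2 → 3 := fun h => h.dominant_gA hU
  tfae_have 3 → 4 := fun h => h.uTtuRed_astar hU
  tfae_have 4 → 1 := fun h => ⟨Astar U A, h.ttuRed⟩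
  tfae_finish
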